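/- arXiv:2108.09125 — 4 statements merged into one kernel-verified Lean document; each statement's English description precedes it below -/
import Mathlib

section
/- (Lemma: K from LMI implies contraction) Suppose there exist λ ∈ (0,1), X = Xᵀ ≻ 0 and Y such that the block matrix [[X, A_p^i X + B_p^i Y],[X (A_p^i)ᵀ + Yᵀ (B_p^i)ᵀ, λX]] ⪰ 0 for all i ∈ {1,...,H}. Then with K_p := Y X^{-1} and P := X^{-1}, it holds that (A_p^i + B_p^i K_p)ᵀ P (A_p^i + B_p^i K_p) - P ⪯ -(1-λ)P for all i ∈ {1,...,H}. -/
/-!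
Since `K = Y X⁻¹`, the off-diagonal block is `A_K X` with `A_K = Aⁱ + Bⁱ K` the closed-loop
matrix. The Schur complement of the block `X` gives `λX - X A_Kᴴ X⁻¹ A_K X ⪰ 0`, and the
congruence by `X⁻¹` turns this into `λX⁻¹ - A_Kᴴ X⁻¹ A_K ⪰ 0`, which is the claim for `P = X⁻¹`.
-/

open Matrix
open scoped ComplexOrder

namespace Matrix

variable {ι 𝕜 : Type*} [Fintype ι] [DecidableEq ι] [RCLike 𝕜]

theorem PosDef.posSemidef_smul_inv_sub_of_fromBlocks {X : Matrix ι ι 𝕜} (hX : X.PosDef)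
    (M : Matrix ι ι 𝕜) (lam : ℝ)
    (h : (fromBlocks X (M * X) (M * X)ᴴ (lam • X)).PosSemidef) :
    (lam • X⁻¹ - Mᴴ * X⁻¹ * M).PosSemidef := by
  have hdet : IsUnit X.det := (isUnit_iff_isUnit_det X).mp hX.isUnit
  have := X.invertibleOfIsUnitDet hdet
  have hschur : (lam • X - (M * X)ᴴ * X⁻¹ * (M * X)).PosSemidef :=
    (hX.fromBlocks₁₁ (M * X) (lam • X)).mp h
  have hXinv : (X⁻¹)ᴴ = X⁻¹ := by rw [conjTranspose_nonsing_inv, hX.isHermitian.eq]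
  have hcongr : X⁻¹ᴴ * (lam • X - (M * X)ᴴ * X⁻¹ * (M * X)) * X⁻¹
      = lam • X⁻¹ - Mᴴ * X⁻¹ * M := by
    simp only [hXinv, conjTranspose_mul, hX.isHermitian.eq, Matrix.mul_sub, Matrix.sub_mul,
      Matrix.mul_smul, Matrix.smul_mul, Matrix.mul_assoc, mul_nonsing_inv _ hdet,
      nonsing_inv_mul _ hdet, inv_mul_cancel_left_of_invertible, Matrix.mul_one, Matrix.one_mul]
  exact hcongr ▸ hschur.conjTranspose_mul_mul_same X⁻¹

end Matrix

theorem stmt5_general {n m : ℕ} (H : ℕ)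
    (Ap : Matrix (Fin n) (Fin n) ℝ)
    (Bpow : ℕ → Matrix (Fin n) (Fin m) ℝ)
    (lam : ℝ)
    (X : Matrix (Fin n) (Fin n) ℝ) (Y : Matrix (Fin m) (Fin n) ℝ)
    (hX : X.PosDef)
    (hLMI : ∀ i ∈ Finset.Icc 1 H,
      (Matrix.fromBlocks X (Ap ^ i * X + Bpow i * Y)
        (X * (Ap ^ i)ᵀ + Yᵀ * (Bpow i)ᵀ) (lam • X)).PosSemidef)
    (Kp : Matrix (Fin m) (Fin n) ℝ) (hK : Kp = Y * X⁻¹)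
    (P : Matrix (Fin n) (Fin n) ℝ) (hP : P = X⁻¹) :
    ∀ i ∈ Finset.Icc 1 H,
      ((-(1 - lam)) • P
        - ((Ap ^ i + Bpow i * Kp)ᵀ * P * (Ap ^ i + Bpow i * Kp) - P)).PosSemidef := by
  intro i hi
  set M := Ap ^ i + Bpow i * Kp
  have hMX : Ap ^ i * X + Bpow i * Y = M * X := by
    rw [add_mul, hK, Matrix.mul_assoc, Matrix.mul_assoc Y,
      nonsing_inv_mul _ ((isUnit_iff_isUnit_det X).mp hX.isUnit), Matrix.mul_one]
  have hMXt : X * (Ap ^ i)ᵀ + Yᵀ * (Bpow i)ᵀ = (M * X)ᴴ := by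
    have hXt : Xᵀ = X := hX.isHermitian.eq
    rw [← hMX, conjTranspose_eq_transpose_of_trivial, transpose_add, transpose_mul, transpose_mul,
      hXt]
  have hblock := hLMI i hi
  rw [hMXt, hMX] at hblock
  have hcontr := hX.posSemidef_smul_inv_sub_of_fromBlocks M lam hblock
  rw [conjTranspose_eq_transpose_of_trivial, ← hP] at hcontr
  rwa [show (-(1 - lam)) • P - (Mᵀ * P * M - P) = lam • P - Mᵀ * P * M by module]

theorem stmt5 {n m : ℕ} (H : ℕ)
    (Ap : Matrix (Fin n) (Fin n) ℝ) (Bp : Matrix (Fin n) (Fin m) ℝ)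
    (Bpow : ℕ → Matrix (Fin n) (Fin m) ℝ)
    (hBpow : ∀ i, Bpow i = ∑ j ∈ Finset.range i, Ap ^ j * Bp)
    (lam : ℝ) (hlam : lam ∈ Set.Ioo (0 : ℝ) 1)
    (X : Matrix (Fin n) (Fin n) ℝ) (Y : Matrix (Fin m) (Fin n) ℝ)
    (hX : X.PosDef)
    (hLMI : ∀ i ∈ Finset.Icc 1 H,
      (Matrix.fromBlocks X (Ap ^ i * X + Bpow i * Y)
        (X * (Ap ^ i)ᵀ + Yᵀ * (Bpow i)ᵀ) (lam • X)).PosSemidef)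
    (Kp : Matrix (Fin m) (Fin n) ℝ) (hK : Kp = Y * X⁻¹)
    (P : Matrix (Fin n) (Fin n) ℝ) (hP : P = X⁻¹) :
    ∀ i ∈ Finset.Icc 1 H,
      ((-(1 - lam)) • P
        - ((Ap ^ i + Bpow i * Kp)ᵀ * P * (Ap ^ i + Bpow i * Kp) - P)).PosSemidef :=
  stmt5_general H Ap Bpow lam X Y hX hLMI Kp hK P hP
end

section
/- (Correctness of the RCI construction algorithm) Let E ⊆ ℝ^n, and suppose for each i ∈ {1,...,H} there are λ_i ∈ (0,1] with λ_i < 1 and δ_i ≥ 0 such that A_K^i E ⊆ λ_i E and ⊕_{j=0}^{i-1} A_p^j D ⊆ δ_i E. Define ρ := max_{i∈{1,...,H}} δ_i/(1-λ_i) and Ω_p := ρE. If E is convex and contains the origin, then A_K^i Ω_p ⊕ (⊕_{j=0}^{i-1} A_p^j D) ⊆ Ω_p for all i ∈ {1,...,H}. -/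
open Pointwise Matrix Finset

section Scaling

variable {𝕜 V : Type*} [Field 𝕜] [LinearOrder 𝕜] [IsStrictOrderedRing 𝕜]
  [AddCommGroup V] [Module 𝕜 V]

theorem StarConvex.smul_set_subset_smul_set {E : Set V} (hE : StarConvex 𝕜 0 E) {a b : 𝕜}
    (ha : 0 ≤ a) (hab : a ≤ b) : a • E ⊆ b • E := by
  rintro _ ⟨x, hx, rfl⟩
  rcases (ha.trans hab).eq_or_lt with rfl | hb
  · obtain rfl := hab.antisymm ha
    exact Set.smul_mem_smul_set hx
  · refine ⟨(a / b) • x, hE.smul_mem hx (div_nonneg ha hb.le) (div_le_one_of_le₀ hab hb.le), ?_⟩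
    simp only [smul_smul, mul_div_cancel₀ _ hb.ne']

theorem Convex.image_smul_add_subset_smul {E S : Set V} (hE : Convex 𝕜 E) (h0 : 0 ∈ E)
    {f : V →ₗ[𝕜] V} {lam δ ρ : 𝕜} (hρ : 0 ≤ ρ) (hlam : 0 ≤ lam) (hδ : 0 ≤ δ)
    (hf : f '' E ⊆ lam • E) (hS : S ⊆ δ • E) (hle : ρ * lam + δ ≤ ρ) :
    f '' (ρ • E) + S ⊆ ρ • E :=
  calc f '' (ρ • E) + S = ρ • f '' E + S := by rw [image_smul_set]
    _ ⊆ ρ • (lam • E) + δ • E := Set.add_subset_add (Set.smul_set_mono hf) hS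
    _ = (ρ * lam + δ) • E := by rw [smul_smul, hE.add_smul (mul_nonneg hρ hlam) hδ]
    _ ⊆ ρ • E := (hE.starConvex h0).smul_set_subset_smul_set (by positivity) hle

end Scaling

theorem stmt10 {n : ℕ} (H : ℕ) (hH : 1 ≤ H)
    (Ap : Matrix (Fin n) (Fin n) ℝ)
    (AK : ℕ → Matrix (Fin n) (Fin n) ℝ)
    (D E : Set (Fin n → ℝ))
    (hE : Convex ℝ E) (h0 : (0 : Fin n → ℝ) ∈ E)
    (lam δ : ℕ → ℝ)
    (hlam : ∀ i ∈ Finset.Icc 1 H, lam i ∈ Set.Ioc (0 : ℝ) 1 ∧ lam i < 1)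
    (hδ : ∀ i ∈ Finset.Icc 1 H, 0 ≤ δ i)
    (hcontr : ∀ i ∈ Finset.Icc 1 H, (AK i).mulVec '' E ⊆ lam i • E)
    (hdist : ∀ i ∈ Finset.Icc 1 H,
      (∑ j ∈ Finset.range i, (Ap ^ j).mulVec '' D) ⊆ δ i • E)
    (ρ : ℝ)
    (hρ : ρ = (Finset.Icc 1 H).sup' (Finset.nonempty_Icc.mpr hH)
      (fun i => δ i / (1 - lam i)))
    (Ωp : Set (Fin n → ℝ)) (hΩ : Ωp = ρ • E) :
    ∀ i ∈ Finset.Icc 1 H,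
      ((AK i).mulVec '' Ωp) + (∑ j ∈ Finset.range i, (Ap ^ j).mulVec '' D) ⊆ Ωp := by
  intro i hi
  obtain ⟨⟨hlam0, -⟩, hlam1⟩ := hlam i hi
  have hquot : δ i / (1 - lam i) ≤ ρ := hρ ▸ le_sup' (fun i => δ i / (1 - lam i)) hi
  have hρ0 : 0 ≤ ρ := (div_nonneg (hδ i hi) (sub_nonneg.2 hlam1.le)).trans hquot
  rw [div_le_iff₀ (sub_pos.2 hlam1)] at hquot
  subst hΩ
  exact hE.image_smul_add_subset_smul (f := (AK i).mulVecLin) h0 hρ0 hlam0.le (hδ i hi)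
    (hcontr i hi) (hdist i hi) (by linarith)
end

section
/- (Token bucket base period) Consider the token bucket dynamics β(k+1) = min{β(k) + g - γ(k)c, b} with 1 ≤ g ≤ c ≤ b and γ(k) ∈ {0,1}, subject to the constraint that γ(k) = 1 only if β(k) ≥ c - g (so that β stays nonnegative). If β(0) ≥ c - g and transmissions are triggered periodically with period M = ⌈c/g⌉ (γ(k) = 1 iff k mod M = 0), then β(k) ≥ 0 for all k and β(k) ≥ c - g whenever k mod M = 0. -/
/-!
Between two transmissions the bucket gains `g` tokens per step (until it is full), so after a
transmission, which leaves at least `0` tokens, it holds at least `min (j * g) (c - g)` tokens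
`j` steps later. Since `M * g ≥ c`, after the `M - 1` idle steps of a period it is back to at
least `c - g`, which is exactly what the next transmission needs.
-/

/-- `β k` tokens at time `k`, refill `g` per step, capacity `b`, and a transmission costing `c`
at every time `k ≡ 0 [MOD M]`. -/
def IsPeriodicTokenBucket (g c b M : ℕ) (β : ℕ → ℤ) : Prop :=
  ∀ k, β (k + 1) = min (β k + g - (if k % M = 0 then (c : ℤ) else 0)) b

lemma one_le_add_sub_one_div {c g : ℕ} (hg : 1 ≤ g) (hgc : g ≤ c) : 1 ≤ (c + g - 1) / g := by
  rw [Nat.le_div_iff_mul_le (by omega)]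
  omega

lemma le_add_sub_one_div_mul {c g : ℕ} (hg : 1 ≤ g) : c ≤ (c + g - 1) / g * g := by
  have := Nat.lt_div_mul_add (a := c + g - 1) (b := g) (by omega)
  omega

namespace IsPeriodicTokenBucket

variable {g c b M : ℕ} {β : ℕ → ℤ}

lemma add_sub_le_succ (h : IsPeriodicTokenBucket g c b M β) {k : ℕ} (hk : k % M = 0) {x : ℤ}
    (hx : x ≤ β k) (hxb : x + g - c ≤ b) : x + g - c ≤ β (k + 1) := by
  rw [h k, if_pos hk]
  exact le_min (by linarith) hxb

lemma add_le_succ (h : IsPeriodicTokenBucket g c b M β) {k : ℕ} (hk : k % M ≠ 0) {x : ℤ}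
    (hx : x ≤ β k) (hxb : x + g ≤ b) : x + g ≤ β (k + 1) := by
  rw [h k, if_neg hk]
  exact le_min (by linarith) hxb

lemma min_le_add_succ_of_mod_eq_zero (h : IsPeriodicTokenBucket g c b M β) (hcb : c ≤ b) {k : ℕ}
    (hk : k % M = 0) (hβk : (c : ℤ) - g ≤ β k) :
    ∀ j < M, min ((j : ℤ) * g) ((c : ℤ) - g) ≤ β (k + j + 1) := by
  have hcb' : (c : ℤ) ≤ b := by exact_mod_cast hcb
  obtain ⟨q, rfl⟩ := Nat.dvd_of_mod_eq_zero hk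
  intro j hj
  induction j with
  | zero =>
    have := h.add_sub_le_succ hk hβk (by linarith)
    exact (min_le_left _ _).trans (by simpa using this)
  | succ j ih =>
    have hidle : (M * q + (j + 1)) % M ≠ 0 := by
      rw [Nat.mul_add_mod_self_left, Nat.mod_eq_of_lt hj]; omega
    have hcap := min_le_right ((j : ℤ) * g) ((c : ℤ) - g)
    have := h.add_le_succ hidle (ih (by omega)) (by linarith)
    refine le_trans ?_ this
    push_cast
    rw [add_mul, one_mul, ← min_add_add_right, sub_add_cancel]
    exact min_le_min_left _ (by omega)

lemma sub_le_apply_mul (h : IsPeriodicTokenBucket g c b M β) (hM : 0 < M) (hcb : c ≤ b)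
    (hMg : c ≤ M * g) (hβ0 : (c : ℤ) - g ≤ β 0) (n : ℕ) : (c : ℤ) - g ≤ β (M * n) := by
  induction n with
  | zero => simpa using hβ0
  | succ n ih =>
    have := h.min_le_add_succ_of_mod_eq_zero hcb (by simp) ih (M - 1) (by omega)
    have hMg' : (c : ℤ) - g ≤ ((M - 1 : ℕ) : ℤ) * g := by
      have : ((M - 1 : ℕ) : ℤ) = M - 1 := by omega
      rw [this]
      have : (c : ℤ) ≤ M * g := by exact_mod_cast hMg
      linarith
    rwa [min_eq_right hMg', show M * n + (M - 1) + 1 = M * (n + 1) by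
      rw [mul_add]; omega] at this

end IsPeriodicTokenBucket

theorem stmt11 (g c b : ℕ) (hg : 1 ≤ g) (hgc : g ≤ c) (hcb : c ≤ b)
    (M : ℕ) (hM : M = (c + g - 1) / g)
    (β : ℕ → ℤ)
    (hβ0 : (c : ℤ) - g ≤ β 0)
    (hdyn : ∀ k, β (k + 1)
      = min (β k + g - (if k % M = 0 then (c : ℤ) else 0)) b) :
    ∀ k, 0 ≤ β k ∧ (k % M = 0 → (c : ℤ) - g ≤ β k) := by
  have h : IsPeriodicTokenBucket g c b M β := hdyn
  have hM1 : 0 < M := hM ▸ one_le_add_sub_one_div hg hgc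
  have hMg : c ≤ M * g := hM ▸ le_add_sub_one_div_mul hg
  have hperiod := h.sub_le_apply_mul hM1 hcb hMg hβ0
  have hsub : (0 : ℤ) ≤ c - g := by omega
  intro k
  rw [← Nat.div_add_mod k M]
  obtain hr | ⟨r, hr⟩ : k % M = 0 ∨ ∃ r, k % M = r + 1 := by
    rcases k % M with _ | r
    exacts [.inl rfl, .inr ⟨r, rfl⟩]
  · rw [hr, add_zero, Nat.mul_mod_right]
    exact ⟨hsub.trans (hperiod _), fun _ => hperiod _⟩
  · have := h.min_le_add_succ_of_mod_eq_zero hcb (Nat.mul_mod_right M (k / M)) (hperiod _) r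
      (by have := Nat.mod_lt k hM1; omega)
    rw [add_assoc, ← hr] at this
    refine ⟨le_trans (le_min (by positivity) hsub) this, fun hk => ?_⟩
    rw [Nat.mul_add_mod_self_left, Nat.mod_mod] at hk
    omega
end

section
/- (Schedule constraint implies bounded closed-loop inter-transmission times) Let H ≥ M ≥ 1 und N̄ ≥ H. Define N(k) := N̄ - (k mod M). Suppose γ : ℕ → {0,1} is a closed-loop transmission sequence generated such that at each time k a predicted schedule γ̄(·|k) ∈ Γ^H_{N(k)}(s(k)) is chosen with γ(k) = γ̄(0|k), where s(k) counts the steps since the last transmission (s(k+1) = 0 if γ(k)=1, else s(k)+1, with s(0)=0 and γ(0)=1), and Γ^H_N(s) requires the first transmission in the schedule to occur within the first H-s-1 steps unless N ≤ H-s-1. Then for every k, Σ_{i=k}^{k+H-1} γ(i) ≥ 1, i.e., there is a transmission at least every H steps. -/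
/-! The counter `s` grows by one at each step without transmission, and the schedule constraint
forces a transmission as soon as `s k ≥ H - 1`. So a window of `H` silent steps would drive the
counter to `H - 1` inside the window, where a transmission is forced. -/

open Finset

section Counter

variable {γ s : ℕ → ℕ} (hsdyn : ∀ k, s (k + 1) = if γ k = 1 then 0 else s k + 1)
include hsdyn

theorem counter_add_of_forall_ne_one (k : ℕ) :
    ∀ t, (∀ i ∈ Ico k (k + t), γ i ≠ 1) → s (k + t) = s k + t
  | 0, _ => rfl
  | t + 1, hne => by
    have hprev : ∀ i ∈ Ico k (k + t), γ i ≠ 1 := fun i hi =>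
      hne i (Ico_subset_Ico_right (by omega) hi)
    have hlast : γ (k + t) ≠ 1 := hne (k + t) (by simp)
    rw [← add_assoc, hsdyn, if_neg hlast, counter_add_of_forall_ne_one k t hprev, add_assoc]

theorem exists_mem_Icc_eq_one_of_forced {T : ℕ} (hforce : ∀ k, T ≤ s k → γ k = 1) (k : ℕ) :
    ∃ i ∈ Icc k (k + T), γ i = 1 := by
  by_contra! hnone
  have hgrow := counter_add_of_forall_ne_one hsdyn k T fun i hi =>
    hnone i (Ico_subset_Icc_self hi)
  exact hnone (k + T) (by simp) (hforce _ (by omega))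

end Counter

theorem stmt15_general (H M Nbar : ℕ) (hM : 1 ≤ M) (hHM : M ≤ H) (hN : H ≤ Nbar)
    (N : ℕ → ℕ) (hNdef : ∀ k, N k = Nbar - k % M)
    (γ : ℕ → ℕ)
    (s : ℕ → ℕ)
    (hsdyn : ∀ k, s (k + 1) = if γ k = 1 then 0 else s k + 1)
    (γbar : ℕ → ℕ → ℕ)
    (hfirst : ∀ k, γ k = γbar k 0)
    -- predicted schedule lies in Γ^H_{N(k)}(s(k)): either the horizon is short
    -- enough that no transmission is required, or the first transmission occurs
    -- within the first H - s(k) - 1 steps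
    (hsched : ∀ k, N k ≤ H - s k - 1
      ∨ ∃ i, i ≤ H - s k - 1 ∧ i < N k ∧ γbar k i = 1) :
    ∀ k, 1 ≤ ∑ i ∈ Finset.Ico k (k + H), γ i := by
  have hNpos : ∀ k, 1 ≤ N k := fun k => by
    have := Nat.mod_lt k (show 0 < M by omega)
    rw [hNdef]
    omega
  -- Once `s k ≥ H - 1`, the window `H - s k - 1` has length zero and the horizon is nonempty,
  -- so the schedule must transmit immediately.
  have hforce : ∀ k, H - 1 ≤ s k → γ k = 1 := fun k hk => by
    rcases hsched k with hshort | ⟨i, hi, -, hγi⟩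
    · exact absurd (hNpos k) (by omega)
    · rwa [hfirst, ← show i = 0 by omega]
  intro k
  obtain ⟨i, hi, hγi⟩ := exists_mem_Icc_eq_one_of_forced hsdyn hforce k
  have hi' : i ∈ Ico k (k + H) := by simp only [mem_Icc, mem_Ico] at hi ⊢; omega
  exact hγi ▸ single_le_sum (fun _ _ => Nat.zero_le _) hi'

theorem stmt15 (H M Nbar : ℕ) (hM : 1 ≤ M) (hHM : M ≤ H) (hN : H ≤ Nbar)
    (N : ℕ → ℕ) (hNdef : ∀ k, N k = Nbar - k % M)
    (γ : ℕ → ℕ) (hγbin : ∀ k, γ k ≤ 1)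
    (s : ℕ → ℕ) (hs0 : s 0 = 0)
    (hsdyn : ∀ k, s (k + 1) = if γ k = 1 then 0 else s k + 1)
    (hγ0 : γ 0 = 1)
    (γbar : ℕ → ℕ → ℕ)
    (hfirst : ∀ k, γ k = γbar k 0)
    -- predicted schedule lies in Γ^H_{N(k)}(s(k)): either the horizon is short
    -- enough that no transmission is required, or the first transmission occurs
    -- within the first H - s(k) - 1 steps
    (hsched : ∀ k, N k ≤ H - s k - 1
      ∨ ∃ i, i ≤ H - s k - 1 ∧ i < N k ∧ γbar k i = 1) :
    ∀ k, 1 ≤ ∑ i ∈ Finset.Ico k (k + H), γ i :=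
  stmt15_general H M Nbar hM hHM hN N hNdef γ s hsdyn γbar hfirst hsched
end
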